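/- arXiv:2003.11366 — 4 statements merged into one kernel-verified Lean document; each statement's English description precedes it below -/
import Mathlib

section
/- Every simple game on a finite set M is the intersection of finitely many weighted games on M. -/
/-- Every simple game on a finite set is the intersection of finitely many weighted games. -/
theorem stmt2 {α : Type*} [Fintype α] [DecidableEq α] (W : Set (Finset α))
    (hW : ∀ C C' : Finset α, C ∈ W → C ⊆ C' → C' ∈ W) :
    ∃ (k : ℕ) (a : Fin k → α → ℝ) (β : Fin k → ℝ),
      (∀ i m, 0 ≤ a i m) ∧
      W = ⋂ i : Fin k, {C : Finset α | β i ≤ ∑ m ∈ C, a i m} := by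
  classical
  set e := (Fintype.equivFin (Finset α)).symm with he
  refine ⟨Fintype.card (Finset α),
    fun i m => if e i ∈ W then 0 else (if m ∈ e i then 0 else 1),
    fun i => if e i ∈ W then 0 else 1, ?_, ?_⟩
  · intro i m
    dsimp only
    split_ifs <;> norm_num
  · ext C
    simp only [Set.mem_iInter, Set.mem_setOf_eq]
    constructor
    · intro hC i
      by_cases hw : e i ∈ W
      · simp [hw]
      · simp only [hw, if_false]
        have hsub : ¬ C ⊆ e i := fun h => hw (hW C (e i) hC h)
        obtain ⟨m, hmC, hme⟩ := Finset.not_subset.mp hsub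
        calc (1 : ℝ) = ∑ m ∈ {m}, (if m ∈ e i then (0:ℝ) else 1) := by simp [hme]
          _ ≤ _ := by
            apply Finset.sum_le_sum_of_subset_of_nonneg
            · simpa using hmC
            · intro j _ _; split_ifs <;> norm_num
    · intro h
      by_contra hC
      have := h (e.symm C)
      simp only [hC, if_false, Equiv.apply_symm_apply] at this
      have h0 : ∑ x ∈ C, (if x ∈ C then (0:ℝ) else 1) = 0 :=
        Finset.sum_eq_zero (fun x hx => by simp [hx])
      rw [h0] at this
      linarith
end

section
/- Let W be a simple game with losing coalitions L and let N₁,…,N_t ⊆ L be non-separable sets with respect to W. If W has dimension at most k, i.e., W = W₁ ∩ … ∩ W_k for weighted games W₁,…,W_k, then there exist sets L₁,…,L_k ⊆ L such that L₁ ∪ … ∪ L_k = N₁ ∪ … ∪ N_t and N_i ⊄ L_j (N_i is not a subset of L_j) for all i ∈ {1,…,t} and j ∈ {1,…,k}. -/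
/-- If a simple game `W` with non-separable sets `N₁,…,N_t` of losing coalitions has
dimension at most `k` (it is the intersection of `k` weighted games), then a `k`-cover
of `(N₁,…,N_t)` exists. -/
theorem stmt5 {α : Type*} [Fintype α] [DecidableEq α] (W : Set (Finset α))
    (hW : ∀ C C' : Finset α, C ∈ W → C ⊆ C' → C' ∈ W)
    (t k : ℕ) (N : Fin t → Set (Finset α))
    (hNlosing : ∀ i, ∀ L ∈ N i, L ∉ W)
    (hNns : ∀ i, ∀ (a : α → ℝ) (β : ℝ), (∀ m, 0 ≤ a m) →
      W ⊆ {C : Finset α | β ≤ ∑ m ∈ C, a m} →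
      ({C : Finset α | β ≤ ∑ m ∈ C, a m} ∩ N i).Nonempty)
    (a : Fin k → α → ℝ) (β : Fin k → ℝ) (ha : ∀ j m, 0 ≤ a j m)
    (hdim : W = ⋂ j : Fin k, {C : Finset α | β j ≤ ∑ m ∈ C, a j m}) :
    ∃ L : Fin k → Set (Finset α),
      (∀ j, ∀ C ∈ L j, C ∉ W) ∧
      (⋃ j, L j) = ⋃ i, N i ∧
      (∀ i j, ¬ N i ⊆ L j) := by
  refine ⟨fun j => (⋃ i, N i) ∩ {C | ¬ β j ≤ ∑ m ∈ C, a j m}, ?_, ?_, ?_⟩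
  · rintro j C ⟨-, hC⟩ hCW
    exact hC (by rw [hdim] at hCW; exact Set.mem_iInter.mp hCW j)
  · apply Set.Subset.antisymm
    · exact Set.iUnion_subset fun j => Set.inter_subset_left
    · intro C hC
      obtain ⟨i, hi⟩ := Set.mem_iUnion.mp hC
      have hCW : C ∉ W := hNlosing i C hi
      rw [hdim, Set.mem_iInter] at hCW
      push_neg at hCW
      obtain ⟨j, hj⟩ := hCW
      exact Set.mem_iUnion.mpr ⟨j, hC, hj⟩
  · intro i j hsub
    have hWsub : W ⊆ {C : Finset α | β j ≤ ∑ m ∈ C, a j m} := by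
      rw [hdim]; exact Set.iInter_subset _ j
    obtain ⟨C, hC1, hC2⟩ := hNns i (a j) (β j) (ha j) hWsub
    exact (hsub hC2).2 hC1
end

section
/- Let F be the collection of 21 sets {1,2}, {1,3,6}, {1,4}, {1,7,12}, {2,9}, {2,12,14}, {2,13}, {3,8}, {3,11}, {4,5}, {4,7}, {4,10}, {5,6,10}, {5,6,12}, {5,9}, {5,10,13}, {6,10,12}, {7,8}, {8,13}, {11,14}, {15} of subsets of {1,…,15}. With weight vector w = (1/2, 0, 1, 1/2, 0, 1, 1/2, 0, 1, 0, 0, 0, 1, 1, 1) (indexed 1 through 15), every set in F other than {1,3,6} has total weight at most 1, and the total weight of {1,…,15} is 15/2; consequently, no seven sets from F \ {{1,3,6}} can cover {1,…,15}. -/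
set_option maxHeartbeats 1000000

private noncomputable def wdef : ℕ → ℝ := fun i =>
      if i = 1 then 1/2 else if i = 2 then 0 else if i = 3 then 1 else
      if i = 4 then 1/2 else if i = 5 then 0 else if i = 6 then 1 else
      if i = 7 then 1/2 else if i = 8 then 0 else if i = 9 then 1 else
      if i = 10 then 0 else if i = 11 then 0 else if i = 12 then 0 else
      if i = 13 then 1 else if i = 14 then 1 else if i = 15 then 1 else 0

private def Ldef : List (Finset ℕ) :=
  [({1,2} : Finset ℕ), ({1,3,6} : Finset ℕ), ({1,4} : Finset ℕ), ({1,7,12} : Finset ℕ), ({2,9} : Finset ℕ), ({2,12,14} : Finset ℕ), ({2,13} : Finset ℕ), ({3,8} : Finset ℕ), ({3,11} : Finset ℕ), ({4,5} : Finset ℕ), ({4,7} : Finset ℕ), ({4,10} : Finset ℕ), ({5,6,10} : Finset ℕ), ({5,6,12} : Finset ℕ), ({5,9} : Finset ℕ), ({5,10,13} : Finset ℕ), ({6,10,12} : Finset ℕ), ({7,8} : Finset ℕ), ({8,13} : Finset ℕ), ({11,14} : Finset ℕ), ({15} : Finset ℕ)]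

private lemma hw0 : ∀ i, 0 ≤ wdef i := by
  intro i
  unfold wdef
  rcases Nat.lt_or_ge i 16 with h | h
  · interval_cases i <;> norm_num
  · rw [if_neg (by omega : ¬ i = 1), if_neg (by omega : ¬ i = 2), if_neg (by omega : ¬ i = 3),
      if_neg (by omega : ¬ i = 4), if_neg (by omega : ¬ i = 5), if_neg (by omega : ¬ i = 6),
      if_neg (by omega : ¬ i = 7), if_neg (by omega : ¬ i = 8), if_neg (by omega : ¬ i = 9),
      if_neg (by omega : ¬ i = 10), if_neg (by omega : ¬ i = 11), if_neg (by omega : ¬ i = 12),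
      if_neg (by omega : ¬ i = 13), if_neg (by omega : ¬ i = 14), if_neg (by omega : ¬ i = 15)]

private lemma hsum : ∑ i ∈ Finset.Icc 1 15, wdef i = 15/2 := by
  rw [show Finset.Icc 1 15 = ({1,2,3,4,5,6,7,8,9,10,11,12,13,14,15} : Finset ℕ) by decide]
  simp [wdef]; norm_num

private lemma hbound : ∀ F ∈ Ldef, F ≠ ({1,3,6} : Finset ℕ) → ∑ i ∈ F, wdef i ≤ 1 := by
  intro F hF hne
  fin_cases hF
  all_goals first
    | exact absurd rfl hne
    | (simp [wdef]; try norm_num)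

private lemma biUnion_sum_le {ι : Type*} [DecidableEq ι] (s : Finset ι) (S : ι → Finset ℕ)
    (w : ℕ → ℝ) (hw : ∀ i, 0 ≤ w i) :
    ∑ i ∈ s.biUnion S, w i ≤ ∑ j ∈ s, ∑ i ∈ S j, w i := by
  classical
  induction s using Finset.induction_on with
  | empty => simp
  | @insert a s ha ih =>
    rw [Finset.biUnion_insert, Finset.sum_insert ha]
    have := Finset.sum_union_inter (s₁ := S a) (s₂ := s.biUnion S) (f := w)
    have h2 : 0 ≤ ∑ i ∈ S a ∩ s.biUnion S, w i := Finset.sum_nonneg fun i _ => hw i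
    linarith

/-- With the weight vector `w = (1/2,0,1,1/2,0,1,1/2,0,1,0,0,0,1,1,1)`, every member of the
collection other than `{1,3,6}` has weight at most `1`, the total weight of `{1,…,15}`
is `15/2`, and consequently seven sets from the collection, none equal to `{1,3,6}`,
cannot cover `{1,…,15}`. -/
theorem stmt11 :
    let w : ℕ → ℝ := fun i =>
      if i = 1 then 1/2 else if i = 2 then 0 else if i = 3 then 1 else
      if i = 4 then 1/2 else if i = 5 then 0 else if i = 6 then 1 else
      if i = 7 then 1/2 else if i = 8 then 0 else if i = 9 then 1 else
      if i = 10 then 0 else if i = 11 then 0 else if i = 12 then 0 else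
      if i = 13 then 1 else if i = 14 then 1 else if i = 15 then 1 else 0
    (∀ F ∈ ([({1,2} : Finset ℕ), ({1,3,6} : Finset ℕ), ({1,4} : Finset ℕ), ({1,7,12} : Finset ℕ), ({2,9} : Finset ℕ), ({2,12,14} : Finset ℕ), ({2,13} : Finset ℕ), ({3,8} : Finset ℕ), ({3,11} : Finset ℕ), ({4,5} : Finset ℕ), ({4,7} : Finset ℕ), ({4,10} : Finset ℕ), ({5,6,10} : Finset ℕ), ({5,6,12} : Finset ℕ), ({5,9} : Finset ℕ), ({5,10,13} : Finset ℕ), ({6,10,12} : Finset ℕ), ({7,8} : Finset ℕ), ({8,13} : Finset ℕ), ({11,14} : Finset ℕ), ({15} : Finset ℕ)] : List (Finset ℕ)), F ≠ ({1,3,6} : Finset ℕ) → ∑ i ∈ F, w i ≤ 1) ∧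
    (∑ i ∈ Finset.Icc 1 15, w i = 15/2) ∧
    ¬ ∃ S : Fin 7 → Finset ℕ,
      (∀ j, S j ∈ ([({1,2} : Finset ℕ), ({1,3,6} : Finset ℕ), ({1,4} : Finset ℕ), ({1,7,12} : Finset ℕ), ({2,9} : Finset ℕ), ({2,12,14} : Finset ℕ), ({2,13} : Finset ℕ), ({3,8} : Finset ℕ), ({3,11} : Finset ℕ), ({4,5} : Finset ℕ), ({4,7} : Finset ℕ), ({4,10} : Finset ℕ), ({5,6,10} : Finset ℕ), ({5,6,12} : Finset ℕ), ({5,9} : Finset ℕ), ({5,10,13} : Finset ℕ), ({6,10,12} : Finset ℕ), ({7,8} : Finset ℕ), ({8,13} : Finset ℕ), ({11,14} : Finset ℕ), ({15} : Finset ℕ)] : List (Finset ℕ)) ∧ S j ≠ ({1,3,6} : Finset ℕ)) ∧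
      Finset.univ.biUnion S = Finset.Icc 1 15 := by
  intro w
  have hww : w = wdef := rfl
  have hL : ([({1,2} : Finset ℕ), ({1,3,6} : Finset ℕ), ({1,4} : Finset ℕ), ({1,7,12} : Finset ℕ), ({2,9} : Finset ℕ), ({2,12,14} : Finset ℕ), ({2,13} : Finset ℕ), ({3,8} : Finset ℕ), ({3,11} : Finset ℕ), ({4,5} : Finset ℕ), ({4,7} : Finset ℕ), ({4,10} : Finset ℕ), ({5,6,10} : Finset ℕ), ({5,6,12} : Finset ℕ), ({5,9} : Finset ℕ), ({5,10,13} : Finset ℕ), ({6,10,12} : Finset ℕ), ({7,8} : Finset ℕ), ({8,13} : Finset ℕ), ({11,14} : Finset ℕ), ({15} : Finset ℕ)] : List (Finset ℕ)) = Ldef := rfl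
  rw [hww, hL]
  refine ⟨hbound, hsum, ?_⟩
  rintro ⟨S, hS, hcover⟩
  have hle : ∀ j, ∑ i ∈ S j, wdef i ≤ 1 := fun j => hbound (S j) (hS j).1 (hS j).2
  have hmain := biUnion_sum_le (Finset.univ : Finset (Fin 7)) S wdef hw0
  rw [hcover, hsum] at hmain
  have h7 : ∑ j : Fin 7, ∑ i ∈ S j, wdef i ≤ ∑ _j : Fin 7, (1:ℝ) :=
    Finset.sum_le_sum fun j _ => hle j
  simp only [Finset.sum_const, Finset.card_univ, Fintype.card_fin, nsmul_eq_mul] at h7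
  norm_num at h7
  linarith
end

section
/- Let W be a simple game on a finite set M and let N = {L₁, L₂} be losing coalitions. Suppose A ⊆ (L₁ ∪ L₂) \ (L₁ ∩ L₂) is such that W₁ := A ∪ (L₁ ∩ L₂) and W₂ := (L₁ ∪ L₂) \ A are both winning coalitions of W. Then for every m ∈ M, |{i ∈ {1,2} : m ∈ W_i}| = |{i ∈ {1,2} : m ∈ L_i}|, and consequently N is non-separable with respect to W. -/
/-- If `L₁, L₂` are losing coalitions of a simple game `W` and `A` is a subset of the
symmetric difference such that `W₁ = A ∪ (L₁ ∩ L₂)` and `W₂ = (L₁ ∪ L₂) \ A` are both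
winning, then each member is covered by `{W₁, W₂}` as often as by `{L₁, L₂}`, and
`{L₁, L₂}` is non-separable with respect to `W`. -/
theorem stmt16 {α : Type*} [Fintype α] [DecidableEq α] (W : Set (Finset α))
    (hW : ∀ C C' : Finset α, C ∈ W → C ⊆ C' → C' ∈ W)
    (L1 L2 : Finset α) (hL1 : L1 ∉ W) (hL2 : L2 ∉ W)
    (A : Finset α) (hA : A ⊆ (L1 ∪ L2) \ (L1 ∩ L2))
    (hW1 : A ∪ (L1 ∩ L2) ∈ W) (hW2 : (L1 ∪ L2) \ A ∈ W) :
    (∀ m : α,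
      ((if m ∈ A ∪ (L1 ∩ L2) then 1 else 0) +
        (if m ∈ (L1 ∪ L2) \ A then 1 else 0) : ℕ) =
        (if m ∈ L1 then 1 else 0) + (if m ∈ L2 then 1 else 0)) ∧
    (∀ (a : α → ℝ) (β : ℝ), (∀ m, 0 ≤ a m) →
      W ⊆ {C : Finset α | β ≤ ∑ m ∈ C, a m} →
      ({C : Finset α | β ≤ ∑ m ∈ C, a m} ∩ {L1, L2}).Nonempty) := by
  have part1 : ∀ m : α,
      ((if m ∈ A ∪ (L1 ∩ L2) then 1 else 0) +
        (if m ∈ (L1 ∪ L2) \ A then 1 else 0) : ℕ) =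
        (if m ∈ L1 then 1 else 0) + (if m ∈ L2 then 1 else 0) := by
    intro m
    by_cases h3 : m ∈ A
    · have := hA h3
      simp only [Finset.mem_sdiff, Finset.mem_union, Finset.mem_inter] at this
      by_cases h1 : m ∈ L1 <;> by_cases h2 : m ∈ L2 <;>
        simp [Finset.mem_union, Finset.mem_inter, Finset.mem_sdiff, h1, h2, h3] <;> tauto
    · by_cases h1 : m ∈ L1 <;> by_cases h2 : m ∈ L2 <;>
        simp [Finset.mem_union, Finset.mem_inter, Finset.mem_sdiff, h1, h2, h3]
  refine ⟨part1, ?_⟩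
  intro a β ha hsub
  by_contra hne
  rw [Set.not_nonempty_iff_eq_empty, Set.eq_empty_iff_forall_notMem] at hne
  have hn1 : ¬ β ≤ ∑ m ∈ L1, a m := by
    intro h; exact hne L1 ⟨h, by simp⟩
  have hn2 : ¬ β ≤ ∑ m ∈ L2, a m := by
    intro h; exact hne L2 ⟨h, by simp⟩
  have hb1 : β ≤ ∑ m ∈ A ∪ (L1 ∩ L2), a m := hsub hW1
  have hb2 : β ≤ ∑ m ∈ (L1 ∪ L2) \ A, a m := hsub hW2
  have e : ∀ (S : Finset α), ∑ m ∈ S, a m = ∑ m ∈ Finset.univ, if m ∈ S then a m else 0 := by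
    intro S
    rw [Finset.sum_ite_mem, Finset.univ_inter]
  have key : (∑ m ∈ A ∪ (L1 ∩ L2), a m) + ∑ m ∈ (L1 ∪ L2) \ A, a m
      = (∑ m ∈ L1, a m) + ∑ m ∈ L2, a m := by
    rw [e (A ∪ (L1 ∩ L2)), e ((L1 ∪ L2) \ A), e L1, e L2,
      ← Finset.sum_add_distrib, ← Finset.sum_add_distrib]
    apply Finset.sum_congr rfl
    intro m _
    have h := part1 m
    split_ifs at h ⊢ <;> first | ring1 | (exfalso; omega)
  linarith
end
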